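/- arXiv:1505.02799 — 4 statements merged into one kernel-verified Lean document; each statement's English description precedes it below -/
import Mathlib

section
/- Let $G \in \mathbb{C}^{n \times m}$, and let $\Gamma_1, \Gamma_2$ be disjoint sets of column indices of $G$ such that $|\Gamma_1| + |\Gamma_2| > \mathrm{rank}\, G$. Set $\Lambda = (\Gamma_1 \times \Gamma_1) \cup (\Gamma_2 \times \Gamma_2)$. Then there exists a nonzero Hermitian matrix $N \in \mathbb{C}^{m \times m}$ supported on $\Lambda$ with $G N G^* = 0$; equivalently, the columns of $\overline{G} \otimes G$ indexed by $\Lambda$ are linearly dependent. -/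
/-!
A nonzero vector `v` in the kernel of `G`, supported on `Γ₁ ∪ Γ₂`, exists because these columns
are more than `rank G`. Splitting `v = v₁ + v₂` along `Γ₁` and `Γ₂` gives `G v₂ = -G v₁`, so
`N = v₁ v₁ᴴ - v₂ v₂ᴴ` satisfies `G N Gᴴ = (G v₁)(G v₁)ᴴ - (G v₂)(G v₂)ᴴ = 0`; its diagonal is
`±|vₖ|²`, so it is nonzero. The entries of `G N Gᴴ` are the combinations of the columns of
`conj G ⊗ G` with coefficients the entries of `Nᵀ`, which gives the linear dependence.
-/

open Complex Matrix

/-- The column of `conj G ⊗ G` indexed by the pair `(λ, λ')` of column indices of `G`. -/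
def kronCol {n m : ℕ} (G : Matrix (Fin n) (Fin m) ℂ) (l : Fin m × Fin m) :
    Fin n × Fin n → ℂ :=
  fun ii => (starRingEnd ℂ) (G ii.1 l.1) * G ii.2 l.2

namespace Matrix

variable {K ι κ : Type*} [Field K]

theorem exists_ne_zero_mulVec_eq_zero_of_rank_lt_card [Fintype κ] (A : Matrix ι κ K)
    (h : A.rank < Fintype.card κ) : ∃ v ≠ 0, A *ᵥ v = 0 := by
  by_contra! hinj
  have hA : Function.Injective A.mulVecLin := by
    rw [← LinearMap.ker_eq_bot, LinearMap.ker_eq_bot']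
    exact fun v hv => by_contra fun hv0 => hinj v hv0 hv
  have := LinearMap.finrank_range_of_inj hA
  simp only [Module.finrank_fintype_fun_eq_card] at this
  exact h.ne this

theorem exists_ne_zero_mulVec_eq_zero_of_rank_lt_card_finset [Fintype κ] [DecidableEq κ]
    (A : Matrix ι κ K) {s : Finset κ} (h : A.rank < s.card) :
    ∃ v ≠ 0, (∀ j ∉ s, v j = 0) ∧ A *ᵥ v = 0 := by
  obtain ⟨w, hw0, hw⟩ :=
    (A.submatrix id ((↑) : s → κ)).exists_ne_zero_mulVec_eq_zero_of_rank_lt_card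
      ((rank_submatrix_le _ _ _).trans_lt (by simpa using h))
  refine ⟨fun j => if hj : j ∈ s then w ⟨j, hj⟩ else 0, ?_, fun j hj => dif_neg hj, ?_⟩
  · obtain ⟨k, hk⟩ := Function.ne_iff.mp hw0
    exact Function.ne_iff.mpr ⟨k, by simpa using hk⟩
  · ext i
    rw [← hw]
    simp only [mulVec, dotProduct, submatrix_apply, id_eq]
    rw [← Finset.sum_subset s.subset_univ (fun j _ hj => by rw [dif_neg hj, mul_zero]),
      ← Finset.sum_coe_sort s]
    simp

variable [StarRing K]

theorem isHermitian_vecMulVec_star (u : κ → K) : (vecMulVec u (star u)).IsHermitian := by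
  simp [IsHermitian, conjTranspose_vecMulVec]

theorem mul_vecMulVec_star_mul_conjTranspose [Fintype κ] (G : Matrix ι κ K) (u : κ → K) :
    G * vecMulVec u (star u) * Gᴴ = vecMulVec (G *ᵥ u) (star (G *ᵥ u)) := by
  rw [mul_vecMulVec, vecMulVec_mul, star_mulVec]

theorem vecMulVec_star_sub_ne_zero {u w : κ → K} (hdisj : ∀ i, u i = 0 ∨ w i = 0) (hu : u ≠ 0) :
    vecMulVec u (star u) - vecMulVec w (star w) ≠ 0 := by
  obtain ⟨k, hk⟩ := Function.ne_iff.mp hu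
  have hwk : w k = 0 := (hdisj k).resolve_left hk
  intro h
  exact hk (by simpa [vecMulVec_apply, hwk] using congr_fun₂ h k k)

theorem vecMulVec_star_sub_apply_ne_zero {u w : κ → K} {i j : κ}
    (h : (vecMulVec u (star u) - vecMulVec w (star w)) i j ≠ 0) :
    (u i ≠ 0 ∧ u j ≠ 0) ∨ (w i ≠ 0 ∧ w j ≠ 0) := by
  have h' : u i * star (u j) ≠ 0 ∨ w i * star (w j) ≠ 0 := by
    by_contra! h'
    simp [vecMulVec_apply, h'.1, h'.2] at h
  simpa using h'

theorem exists_isHermitian_mul_mul_conjTranspose_eq_zero [Fintype κ] [DecidableEq κ]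
    (G : Matrix ι κ K) {s t : Finset κ} (hst : Disjoint s t) (h : G.rank < s.card + t.card) :
    ∃ N : Matrix κ κ K, N ≠ 0 ∧ N.IsHermitian ∧
      (∀ i j, N i j ≠ 0 → (i ∈ s ∧ j ∈ s) ∨ (i ∈ t ∧ j ∈ t)) ∧ G * N * Gᴴ = 0 := by
  obtain ⟨v, hv0, hvst, hGv⟩ := G.exists_ne_zero_mulVec_eq_zero_of_rank_lt_card_finset
    (s := s ∪ t) (by rwa [Finset.card_union_of_disjoint hst])
  set u := s.piecewise v 0
  set w := t.piecewise v 0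
  have hu : ∀ i, u i ≠ 0 → i ∈ s := fun i hi =>
    by_contra fun his => hi (s.piecewise_eq_of_notMem _ _ his)
  have hw : ∀ i, w i ≠ 0 → i ∈ t := fun i hi =>
    by_contra fun hit => hi (t.piecewise_eq_of_notMem _ _ hit)
  have hvuw : v = u + w := by
    ext i
    by_cases his : i ∈ s
    · simp [u, w, his, Finset.disjoint_left.mp hst his]
    by_cases hit : i ∈ t
    · simp [u, w, his, hit]
    · simp [u, w, his, hit, hvst i (by simp [his, hit])]
  have hdisj : ∀ i, u i = 0 ∨ w i = 0 := fun i => by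
    by_contra! hi
    exact Finset.disjoint_left.mp hst (hu i hi.1) (hw i hi.2)
  have hGw : G *ᵥ w = -(G *ᵥ u) := by
    rw [eq_neg_iff_add_eq_zero, add_comm, ← mulVec_add, ← hvuw, hGv]
  refine ⟨vecMulVec u (star u) - vecMulVec w (star w), ?_, ?_, ?_, ?_⟩
  · by_cases hu0 : u = 0
    · have hw0 : w ≠ 0 := fun hw0 => hv0 (by simp [hvuw, hu0, hw0])
      rw [← neg_sub]
      exact neg_ne_zero.mpr (vecMulVec_star_sub_ne_zero (fun i => (hdisj i).symm) hw0)
    · exact vecMulVec_star_sub_ne_zero hdisj hu0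
  · exact (isHermitian_vecMulVec_star u).sub (isHermitian_vecMulVec_star w)
  · intro i j hij
    rcases vecMulVec_star_sub_apply_ne_zero hij with ⟨hi, hj⟩ | ⟨hi, hj⟩
    · exact Or.inl ⟨hu i hi, hu j hj⟩
    · exact Or.inr ⟨hw i hi, hw j hj⟩
  · rw [Matrix.mul_sub, Matrix.sub_mul, mul_vecMulVec_star_mul_conjTranspose,
      mul_vecMulVec_star_mul_conjTranspose, hGw]
    simp

end Matrix

theorem sum_smul_kronCol {n m : ℕ} (G : Matrix (Fin n) (Fin m) ℂ)
    (N : Matrix (Fin m) (Fin m) ℂ) :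
    ∑ l, N l.2 l.1 • kronCol G l = fun ii => (G * N * Gᴴ) ii.2 ii.1 := by
  ext ii
  simp only [Finset.sum_apply, Pi.smul_apply, smul_eq_mul, kronCol, mul_apply,
    conjTranspose_apply, RCLike.star_def, Finset.sum_mul, Fintype.sum_prod_type]
  exact Finset.sum_congr rfl fun _ _ => Finset.sum_congr rfl fun _ _ => by ring

theorem not_linearIndepOn_kronCol {n m : ℕ} (G : Matrix (Fin n) (Fin m) ℂ)
    {Pat : Set (Fin m × Fin m)} {N : Matrix (Fin m) (Fin m) ℂ} (hN : N ≠ 0)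
    (hsupp : ∀ i j, N i j ≠ 0 → (j, i) ∈ Pat) (hGN : G * N * Gᴴ = 0) :
    ¬ LinearIndepOn ℂ (kronCol G) Pat := by
  intro hind
  set c : Fin m × Fin m → ℂ := fun l => N l.2 l.1
  set S := Finset.univ.filter fun l => c l ≠ 0
  have hS : LinearIndepOn ℂ (kronCol G) S :=
    hind.mono fun l hl => hsupp _ _ (Finset.mem_filter.mp hl).2
  have hsum : ∑ l ∈ S, c l • kronCol G l = 0 := by
    rw [Finset.sum_filter_of_ne fun l _ h => left_ne_zero_of_smul h, sum_smul_kronCol, hGN]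
    rfl
  obtain ⟨i, j, hij⟩ : ∃ i j, N i j ≠ 0 := by
    by_contra! h
    exact hN (Matrix.ext h)
  exact hij (linearIndepOn_finset_iff.mp hS c hsum (j, i) (by simp [S, c, hij]))

/-- if `Γ₁, Γ₂` are disjoint column index sets with `|Γ₁| + |Γ₂| > rank G`, then
(for `Pat = Γ₁×Γ₁ ∪ Γ₂×Γ₂`) there is a nonzero Hermitian `N` supported on `Pat` with
`G N Gᴴ = 0`; equivalently the columns of `conj G ⊗ G` indexed by `Pat` are dependent. -/
theorem stmt5 {n m : ℕ} (G : Matrix (Fin n) (Fin m) ℂ) (Γ₁ Γ₂ : Finset (Fin m))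
    (hdisj : Disjoint Γ₁ Γ₂) (hcard : G.rank < Γ₁.card + Γ₂.card)
    (Pat : Set (Fin m × Fin m))
    (hPat : Pat = (Γ₁ : Set (Fin m)) ×ˢ (Γ₁ : Set (Fin m)) ∪
      (Γ₂ : Set (Fin m)) ×ˢ (Γ₂ : Set (Fin m))) :
    (∃ N : Matrix (Fin m) (Fin m) ℂ, N ≠ 0 ∧ N.IsHermitian ∧
      (∀ i j : Fin m, N i j ≠ 0 → (i, j) ∈ Pat) ∧ G * N * Gᴴ = 0) ∧
    ¬ LinearIndependent ℂ (fun l : Pat => kronCol G l.val) := by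
  obtain ⟨N, hN0, hNherm, hNsupp, hGN⟩ :=
    G.exists_isHermitian_mul_mul_conjTranspose_eq_zero hdisj hcard
  have hNPat : ∀ i j, N i j ≠ 0 → (i, j) ∈ Pat := fun i j hij => by
    subst hPat
    simpa using hNsupp i j hij
  have hNPat_swap : ∀ i j, N i j ≠ 0 → (j, i) ∈ Pat := fun i j hij =>
    hNPat j i fun hji => hij (by rw [← hNherm.apply i j, hji, star_zero])
  exact ⟨⟨N, hN0, hNherm, hNPat, hGN⟩, not_linearIndepOn_kronCol G hN0 hNPat_swap hGN⟩
end

section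
/- Let $L \geq 1$ and let $c \in \mathbb{C}^L$ be such that $V_c c[p,q] = \sum_r e^{-2\pi i p r/L} c[r]\overline{c[r-q]} \neq 0$ for all $(p,q) \in \mathbb{Z}_L \times \mathbb{Z}_L$. For each $(k,n)$, define the rank-one operator $P_{k,n} x = \langle x, M^n T^k c\rangle\, M^n T^k c$ on $\mathbb{C}^L$. Then the family $\{P_{k,n}\}_{(k,n) \in \mathbb{Z}_L \times \mathbb{Z}_L}$ is linearly independent in the space of linear operators on $\mathbb{C}^L$. -/
open Complex Matrix

/-- The character value `e^{2πi x / L}` for `x : ZMod L`. -/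
noncomputable def zchar (L : ℕ) [NeZero L] (x : ZMod L) : ℂ :=
  Complex.exp (2 * (Real.pi : ℂ) * Complex.I * (x.val : ℂ) / (L : ℂ))

/-- The Gabor atom `M^n T^k c`, i.e. `m ↦ e^{2πi n m / L} c[m-k]`. -/
noncomputable def gaborAtom (L : ℕ) [NeZero L] (c : ZMod L → ℂ) (k n : ZMod L) :
    ZMod L → ℂ :=
  fun m => zchar L (n * m) * c (m - k)

/-- The finite short-time Fourier transform of `c` with respect to itself. -/
noncomputable def Vcc (L : ℕ) [NeZero L] (c : ZMod L → ℂ) (p q : ZMod L) : ℂ :=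
  ∑ r : ZMod L,
    Complex.exp (-(2 * (Real.pi : ℂ) * Complex.I * (p.val : ℂ) * (r.val : ℂ)) / (L : ℂ)) *
      c r * (starRingEnd ℂ) (c (r - q))

/-- The rank-one operator `P_{k,n} x = ⟨x, M^n T^k c⟩ M^n T^k c`, as a matrix. -/
noncomputable def Pmat (L : ℕ) [NeZero L] (c : ZMod L → ℂ) (k n : ZMod L) :
    Matrix (ZMod L) (ZMod L) ℂ :=
  Matrix.of fun m r => gaborAtom L c k n m * (starRingEnd ℂ) (gaborAtom L c k n r)

/-! The spreading function of `P_{k,n}` is the character `(p, q) ↦ e^{2πi(nq - pk)/L}` of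
`ZMod L × ZMod L` times `V_c c`. Distinct `(k, n)` give distinct characters, which are linearly
independent (Dedekind); multiplying by the nowhere-vanishing `V_c c` keeps them independent, and
since taking the spreading function is linear, so are the `P_{k,n}`. -/

open Finset

local notation "ψ" => ZMod.stdAddChar

theorem LinearIndependent.mul_left_of_isUnit {ι α R : Type*} [CommRing R] {f : ι → α → R}
    (hf : LinearIndependent R f) {v : α → R} (hv : IsUnit v) :
    LinearIndependent R (fun i => v * f i) :=
  hf.map' (LinearMap.mulLeft R v) (LinearMap.ker_eq_bot.mpr hv.mul_right_injective)

section

variable {L : ℕ} [NeZero L]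

lemma zchar_eq_stdAddChar (x : ZMod L) : zchar L x = ψ x := by
  rw [ZMod.stdAddChar_apply, ZMod.toCircle_apply, zchar]

lemma Vcc_eq_sum_stdAddChar (c : ZMod L → ℂ) (p q : ZMod L) :
    Vcc L c p q = ∑ r, ψ (-(p * r)) * c r * starRingEnd ℂ (c (r - q)) := by
  refine sum_congr rfl fun r _ => ?_
  have hpr : p * r = ((p.val * r.val : ℤ) : ZMod L) := by simp
  rw [hpr, AddChar.map_neg_eq_inv, ZMod.stdAddChar_coe, ← Complex.exp_neg]
  congr 3
  push_cast
  ring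

noncomputable def phaseSpaceChar (kn : ZMod L × ZMod L) : AddChar (ZMod L × ZMod L) ℂ :=
  (AddChar.mulShift ψ (-kn.1)).compAddMonoidHom (AddMonoidHom.fst _ _) *
    (AddChar.mulShift ψ kn.2).compAddMonoidHom (AddMonoidHom.snd _ _)

lemma phaseSpaceChar_apply (kn pq : ZMod L × ZMod L) :
    phaseSpaceChar kn pq = ψ (-kn.1 * pq.1) * ψ (kn.2 * pq.2) := rfl

lemma phaseSpaceChar_injective : Function.Injective (phaseSpaceChar (L := L)) := by
  have hinj := AddChar.to_mulShift_inj_of_isPrimitive (ZMod.isPrimitive_stdAddChar L)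
  rintro ⟨k, n⟩ ⟨k', n'⟩ h
  have hk : AddChar.mulShift ψ (-k) = AddChar.mulShift ψ (-k') := by
    ext p
    simpa [phaseSpaceChar_apply] using DFunLike.congr_fun h (p, 0)
  have hn : AddChar.mulShift ψ n = AddChar.mulShift ψ n' := by
    ext q
    simpa [phaseSpaceChar_apply] using DFunLike.congr_fun h (0, q)
  simp [neg_inj.mp (hinj hk), hinj hn]

/-- Up to the factor `1 / L`, the spreading function of `A`: the discrete Fourier transform of its
`q`-th diagonal `m ↦ A m (m - q)`. -/
noncomputable def spreading : Matrix (ZMod L) (ZMod L) ℂ →ₗ[ℂ] (ZMod L × ZMod L → ℂ) where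
  toFun A pq := ∑ m, ψ (-(pq.1 * m)) * A m (m - pq.2)
  map_add' A B := by ext pq; simp [mul_add, sum_add_distrib]
  map_smul' a A := by ext pq; simp [mul_left_comm, mul_sum]

lemma spreading_Pmat (c : ZMod L → ℂ) (k n : ZMod L) :
    spreading (Pmat L c k n) = ⇑(phaseSpaceChar (k, n)) * fun pq => Vcc L c pq.1 pq.2 := by
  ext ⟨p, q⟩
  simp only [spreading, LinearMap.coe_mk, AddHom.coe_mk, Pi.mul_apply, phaseSpaceChar_apply,
    Vcc_eq_sum_stdAddChar, mul_sum]
  rw [← Equiv.sum_comp (Equiv.addRight k)]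
  refine sum_congr rfl fun r _ => ?_
  simp only [Equiv.coe_addRight, Pmat, of_apply, gaborAtom, zchar_eq_stdAddChar, map_mul,
    ← AddChar.map_neg_eq_conj, add_sub_cancel_right, sub_right_comm _ q k]
  have hphase : ψ (-(p * (r + k))) * ψ (n * (r + k)) * ψ (-(n * (r + k - q)))
      = ψ (-k * p) * ψ (n * q) * ψ (-(p * r)) := by
    simp only [← AddChar.map_add_eq_mul]
    congr 1
    ring
  linear_combination (c r * starRingEnd ℂ (c (r - q))) * hphase

end

/-- if `V_c c` vanishes nowhere, the `L²` rank-one projections `P_{k,n}` onto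
the Gabor atoms `M^n T^k c` are linearly independent. -/
theorem stmt13 (L : ℕ) [NeZero L] (c : ZMod L → ℂ)
    (hfull : ∀ p q : ZMod L, Vcc L c p q ≠ 0) :
    LinearIndependent ℂ (fun kn : ZMod L × ZMod L => Pmat L c kn.1 kn.2) := by
  have hVcc : IsUnit fun pq : ZMod L × ZMod L => Vcc L c pq.1 pq.2 :=
    Pi.isUnit_iff.mpr fun pq => (hfull pq.1 pq.2).isUnit
  have hchars : LinearIndependent ℂ fun kn => ⇑(phaseSpaceChar (L := L) kn) :=
    (AddChar.linearIndependent _ ℂ).comp _ phaseSpaceChar_injective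
  refine LinearIndependent.of_comp spreading ?_
  simpa [Function.comp_def, spreading_Pmat, mul_comm] using hchars.mul_left_of_isUnit hVcc
end

section
/- Let $c = (c_0, c_1) \in \mathbb{C}^2$, let $G$ be the $2 \times 4$ Gabor matrix with columns $M^n T^k c$, $k,n \in \{0,1\}$ (where $T c = (c_1, c_0)$ and $M c = (c_0, -c_1)$), and let $G_{\mathrm{diag}}$ be the $4 \times 4$ matrix whose columns are $\overline{(M^n T^k c)} \otimes (M^n T^k c)$, $(k,n) \in \{0,1\}^2$. Then $\det G_{\mathrm{diag}} = \pm 4 (|c_0|^4 - |c_1|^4)(c_0^2 \overline{c_1}^2 - c_1^2 \overline{c_0}^2)$ (up to a sign depending on column ordering); in particular, $G_{\mathrm{diag}}$ is invertible whenever $|c_0| \neq |c_1|$ and $c_0^2 \overline{c_1}^2 \notin \mathbb{R}$ or more precisely $c_0^2\overline{c_1}^2 \neq c_1^2 \overline{c_0}^2$. -/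
/-!
Up to reindexing, `G_diag` is the matrix `!![x, x, y, y; u, -u, v, -v; v, -v, u, -u; y, y, x, x]`
with `x = |c₀|²`, `y = |c₁|²`, `u = conj c₀ c₁`, `v = conj c₁ c₀`. Replacing the two columns of
each translate by their sum and difference splits it into the blocks `!![x, y; y, x]` and
`!![u, v; v, u]`, whence `det G_diag = 4 (x² - y²)(v² - u²)`.
-/

open Complex Matrix

/-- The Gabor atom `M^n T^k c` for `L = 2` and window `c = (c₀, c₁)`, where
`T c = (c₁, c₀)` and `M c = (c₀, -c₁)`. -/
def atom2 (c₀ c₁ : ℂ) (kn : Fin 2 × Fin 2) : Fin 2 → ℂ :=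
  fun m => (if kn.2 = 1 ∧ m = 1 then -1 else 1) * (if m + kn.1 = 0 then c₀ else c₁)

/-- The `4 × 4` matrix whose columns are `conj(M^n T^k c) ⊗ (M^n T^k c)`. -/
def Gdiag (c₀ c₁ : ℂ) : Matrix (Fin 2 × Fin 2) (Fin 2 × Fin 2) ℂ :=
  Matrix.of fun ii kn => (starRingEnd ℂ) (atom2 c₀ c₁ kn ii.1) * atom2 c₀ c₁ kn ii.2

open ComplexConjugate

theorem det_fin_four_gabor {R : Type*} [CommRing R] (x y u v : R) :
    det !![x, x, y, y; u, -u, v, -v; v, -v, u, -u; y, y, x, x] =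
      4 * (x ^ 2 - y ^ 2) * (v ^ 2 - u ^ 2) := by
  simp [det_succ_row_zero, Fin.sum_univ_succ, Fin.succAbove]
  ring

theorem Gdiag_eq_submatrix (c₀ c₁ : ℂ) :
    Gdiag c₀ c₁ =
      (!![conj c₀ * c₀, conj c₀ * c₀, conj c₁ * c₁, conj c₁ * c₁;
          conj c₀ * c₁, -(conj c₀ * c₁), conj c₁ * c₀, -(conj c₁ * c₀);
          conj c₁ * c₀, -(conj c₁ * c₀), conj c₀ * c₁, -(conj c₀ * c₁);
          conj c₁ * c₁, conj c₁ * c₁, conj c₀ * c₀, conj c₀ * c₀] :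
        Matrix (Fin 4) (Fin 4) ℂ).submatrix finProdFinEquiv finProdFinEquiv := by
  ext ⟨i₁, i₂⟩ ⟨k, n⟩
  fin_cases i₁ <;> fin_cases i₂ <;> fin_cases k <;> fin_cases n <;>
    simp [Gdiag, atom2, finProdFinEquiv]

theorem det_Gdiag (c₀ c₁ : ℂ) :
    (Gdiag c₀ c₁).det =
      4 * ((‖c₀‖ : ℂ) ^ 4 - (‖c₁‖ : ℂ) ^ 4) *
        (c₀ ^ 2 * conj c₁ ^ 2 - c₁ ^ 2 * conj c₀ ^ 2) := by
  rw [Gdiag_eq_submatrix, det_submatrix_equiv_self, det_fin_four_gabor, conj_mul', conj_mul']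
  ring

/-- `det G_diag = ±4(|c₀|⁴ - |c₁|⁴)(c₀² conj(c₁)² - c₁² conj(c₀)²)` (sign
depending on the column ordering); in particular `G_diag` is invertible whenever
`|c₀| ≠ |c₁|` and `c₀² conj(c₁)² ≠ c₁² conj(c₀)²`. -/
theorem stmt14 (c₀ c₁ : ℂ) :
    ((Gdiag c₀ c₁).det =
        4 * (((‖c₀‖ : ℂ)) ^ 4 - ((‖c₁‖ : ℂ)) ^ 4) *
          (c₀ ^ 2 * ((starRingEnd ℂ) c₁) ^ 2 - c₁ ^ 2 * ((starRingEnd ℂ) c₀) ^ 2) ∨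
      (Gdiag c₀ c₁).det =
        -(4 * (((‖c₀‖ : ℂ)) ^ 4 - ((‖c₁‖ : ℂ)) ^ 4) *
          (c₀ ^ 2 * ((starRingEnd ℂ) c₁) ^ 2 - c₁ ^ 2 * ((starRingEnd ℂ) c₀) ^ 2))) ∧
    ((‖c₀‖ ≠ ‖c₁‖ ∧
        c₀ ^ 2 * ((starRingEnd ℂ) c₁) ^ 2 ≠ c₁ ^ 2 * ((starRingEnd ℂ) c₀) ^ 2) →
      IsUnit (Gdiag c₀ c₁).det) := by
  refine ⟨Or.inl (det_Gdiag c₀ c₁), fun ⟨hnorm, hconj⟩ => ?_⟩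
  have hpow : (‖c₀‖ : ℂ) ^ 4 ≠ (‖c₁‖ : ℂ) ^ 4 := by
    exact_mod_cast (pow_left_inj₀ (norm_nonneg c₀) (norm_nonneg c₁) (by norm_num)).not.mpr hnorm
  rw [det_Gdiag, isUnit_iff_ne_zero]
  exact mul_ne_zero (mul_ne_zero (by norm_num) (sub_ne_zero.mpr hpow)) (sub_ne_zero.mpr hconj)
end

section
/- Let $G \in \mathbb{C}^{n \times m}$, $\Lambda$ an spd pattern. Suppose that for every positive semidefinite $Y \in \mathbb{C}^{n \times n}$ of the form $Y = G X_0 G^*$ for some positive semidefinite $X_0$ supported on $\Lambda$, the positive semidefinite matrix $X$ supported on $\Lambda$ with $Y = G X G^*$ is unique. Then every Hermitian $N$ supported on $\Lambda$ with $G N G^* = 0$ is zero. -/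
open Complex Matrix
open scoped ComplexOrder

/-!
Let `N` be Hermitian, supported on `Λ`, with `G N Gᴴ = 0`; take `C = ‖N‖₁` and let `E` be the
diagonal indicator of `{λ | (λ, λ) ∈ Λ}`. Since `Λ` is an spd pattern, `N` vanishes on every row
`λ` with `(λ, λ) ∉ Λ`, while on the other rows `C E` adds `C ≥ ∑ μ, |N λ μ|` to the diagonal. So
`C E + N` is diagonally dominant with nonnegative diagonal, hence positive semidefinite by
Gershgorin's theorem. Now `C E` and `C E + N` are positive semidefinite, supported on `Λ`, and have
the same image under `X ↦ G X Gᴴ`, so uniqueness forces `N = 0`.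
-/

namespace Matrix

section SupportedOn

variable {m n α : Type*}

def SupportedOn [Zero α] (X : Matrix m n α) (P : Set (m × n)) : Prop :=
  ∀ i j, X i j ≠ 0 → (i, j) ∈ P

theorem SupportedOn.add [AddZeroClass α] {X Y : Matrix m n α} {P : Set (m × n)}
    (hX : X.SupportedOn P) (hY : Y.SupportedOn P) : (X + Y).SupportedOn P := by
  intro i j hij
  by_cases hXij : X i j = 0
  · exact hY i j (by simpa [hXij] using hij)
  · exact hX i j hXij

theorem supportedOn_diagonal [Zero α] [DecidableEq n] {d : n → α} {P : Set (n × n)}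
    (hd : ∀ i, d i ≠ 0 → (i, i) ∈ P) : (diagonal d).SupportedOn P := by
  intro i j hij
  obtain rfl : i = j := by_contra fun h => hij (diagonal_apply_ne d h)
  exact hd i (by simpa using hij)

theorem SupportedOn.apply_eq_zero_of_diag_notMem [Zero α] {X : Matrix n n α} {P : Set (n × n)}
    (hX : X.SupportedOn P) (hP : ∀ i j, (i, j) ∈ P → (i, i) ∈ P) {k : n} (hk : (k, k) ∉ P)
    (j : n) : X k j = 0 :=
  by_contra fun h => hk (hP k j (hX k j h))

end SupportedOn

section DiagonalDominance

variable {n 𝕜 : Type*} [Fintype n] [DecidableEq n] [RCLike 𝕜]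

theorem IsHermitian.hasEigenvalue_eigenvalues {A : Matrix n n 𝕜} (hA : A.IsHermitian) (i : n) :
    Module.End.HasEigenvalue (toLin' A) (hA.eigenvalues i : 𝕜) := by
  refine Module.End.hasEigenvalue_of_hasEigenvector (x := ⇑(hA.eigenvectorBasis i)) ⟨?_, ?_⟩
  · rw [Module.End.mem_genEigenspace_one, toLin'_apply, hA.mulVec_eigenvectorBasis,
      RCLike.real_smul_eq_coe_smul (K := 𝕜)]
  · exact fun h => hA.eigenvectorBasis.orthonormal.ne_zero i (WithLp.ofLp_injective _ h)

theorem IsHermitian.posSemidef_of_sum_row_le_diag {A : Matrix n n 𝕜} (hA : A.IsHermitian)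
    (h : ∀ k, ∑ j ∈ Finset.univ.erase k, ‖A k j‖ ≤ RCLike.re (A k k)) : A.PosSemidef := by
  refine hA.posSemidef_iff_eigenvalues_nonneg.2 fun i => ?_
  obtain ⟨k, hk⟩ := eigenvalue_mem_ball (hA.hasEigenvalue_eigenvalues i)
  rw [Metric.mem_closedBall, dist_comm, dist_eq_norm] at hk
  have hre := RCLike.re_le_norm (A k k - hA.eigenvalues i)
  simp only [map_sub, RCLike.ofReal_re] at hre
  simp only [Pi.zero_apply]
  linarith [h k]

theorem IsHermitian.posSemidef_diagonal_indicator_add {N : Matrix n n 𝕜} (hN : N.IsHermitian)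
    {s : Set n} (hs : ∀ k ∉ s, ∀ j, N k j = 0) {c : ℝ} (hc : ∀ k, ∑ j, ‖N k j‖ ≤ c) :
    (diagonal (s.indicator fun _ => (c : 𝕜)) + N).PosSemidef := by
  have hD : (diagonal (s.indicator fun _ => (c : 𝕜))).IsHermitian :=
    isHermitian_diagonal_of_self_adjoint _ <| funext fun k => by
      by_cases hk : k ∈ s <;> simp [hk]
  refine (hD.add hN).posSemidef_of_sum_row_le_diag fun k => ?_
  have hoff : ∑ j ∈ Finset.univ.erase k, ‖(diagonal (s.indicator fun _ => (c : 𝕜)) + N) k j‖ =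
      ∑ j ∈ Finset.univ.erase k, ‖N k j‖ :=
    Finset.sum_congr rfl fun j hj => by
      rw [add_apply, diagonal_apply_ne _ (Finset.ne_of_mem_erase hj).symm, zero_add]
  rw [hoff, add_apply, diagonal_apply_eq, map_add]
  by_cases hk : k ∈ s
  · have hrow := Finset.sum_erase_add _ (fun j => ‖N k j‖) (Finset.mem_univ k)
    have hre := neg_le_of_abs_le (RCLike.abs_re_le_norm (N k k))
    simp only [Set.indicator_of_mem hk, RCLike.ofReal_re]
    linarith [hc k]
  · simp [hs k hk, Set.indicator_of_notMem hk]

end DiagonalDominance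

end Matrix

/-- if positive semidefinite matrices supported on the spd pattern `Pat` are
uniquely determined by `X ↦ G X Gᴴ`, then every Hermitian `N` supported on `Pat` with
`G N Gᴴ = 0` is zero. -/
theorem stmt16 {n m : ℕ} (G : Matrix (Fin n) (Fin m) ℂ) (Pat : Set (Fin m × Fin m))
    (hspd : ∀ l l' : Fin m, (l, l') ∈ Pat →
      (l', l) ∈ Pat ∧ (l, l) ∈ Pat ∧ (l', l') ∈ Pat)
    (huniq : ∀ X₀ X : Matrix (Fin m) (Fin m) ℂ,
      X₀.PosSemidef → (∀ i j : Fin m, X₀ i j ≠ 0 → (i, j) ∈ Pat) →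
      X.PosSemidef → (∀ i j : Fin m, X i j ≠ 0 → (i, j) ∈ Pat) →
      G * X * Gᴴ = G * X₀ * Gᴴ → X = X₀) :
    ∀ N : Matrix (Fin m) (Fin m) ℂ, N.IsHermitian →
      (∀ i j : Fin m, N i j ≠ 0 → (i, j) ∈ Pat) → G * N * Gᴴ = 0 → N = 0 := by
  intro N hN (hNsupp : N.SupportedOn Pat) hGN
  set s : Set (Fin m) := {l | (l, l) ∈ Pat}
  set C : ℝ := ∑ i, ∑ j, ‖N i j‖
  set E := diagonal (s.indicator fun _ => (C : ℂ))
  have hEsupp : E.SupportedOn Pat :=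
    supportedOn_diagonal fun l hl => by_contra fun h => hl (Set.indicator_of_notMem (s := s) h _)
  have hE : E.PosSemidef :=
    PosSemidef.diagonal fun l => Set.indicator_nonneg (fun _ _ => zero_le_real.2 (by positivity)) l
  have hEN : (E + N).PosSemidef :=
    hN.posSemidef_diagonal_indicator_add
      (fun _ hk => hNsupp.apply_eq_zero_of_diag_notMem (fun l l' h => (hspd l l' h).2.1) hk)
      (fun k => Finset.single_le_sum (f := fun i => ∑ j, ‖N i j‖) (fun i _ => by positivity)
        (Finset.mem_univ k))
  have hsame : G * (E + N) * Gᴴ = G * E * Gᴴ := by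
    rw [Matrix.mul_add, Matrix.add_mul, hGN, add_zero]
  exact add_eq_left.mp (huniq E (E + N) hE hEsupp hEN (hEsupp.add hNsupp) hsame)
end
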